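/- arXiv:1207.0430 — 7 statements merged into one kernel-verified Lean document; each statement's English description precedes it below -/
import Mathlib

section
/- For all positive integers m and n, the sum of the n-th powers of the first m positive integers satisfies ∑_{i=1}^m i^n = ∑_{k=0}^{n-1} A_{n,k} · C(m+k+1, n+1), where C denotes the binomial coefficient. -/
open scoped Classical

/-- Number of ascents of a permutation of `Fin n`:
positions `j` with `j + 1 < n` and `π j < π (j+1)`. -/
noncomputable def ascentCount {n : ℕ} (π : Equiv.Perm (Fin n)) : ℕ :=
  ((Finset.range (n - 1)).filter (fun j =>
    ∃ h : j + 1 < n, π ⟨j, Nat.lt_of_succ_lt h⟩ < π ⟨j + 1, h⟩)).card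

/-- The Eulerian number `A_{n,k}`: the number of permutations of an `n`-element
linearly ordered set with exactly `k` ascents. -/
noncomputable def eulerian (n k : ℕ) : ℕ :=
  (Finset.univ.filter (fun π : Equiv.Perm (Fin n) => ascentCount π = k)).card

/-- The `n`-th Eulerian polynomial `A_n(t) = ∑_{k=0}^{n-1} A_{n,k} t^k`, with `A_0(t) = 1`. -/
noncomputable def eulerianPoly (n : ℕ) (t : ℝ) : ℝ :=
  if n = 0 then 1 else ∑ k ∈ Finset.range n, (eulerian n k : ℝ) * t ^ k

/-!
Worpitzky's identity `x ^ n = ∑ₖ A_{n,k} C(x + k, n)` is proved by sorting: every map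
`f : Fin n → Fin x` has a unique permutation `σ = Tuple.sort f` such that `f ∘ σ` is weakly
increasing with ties broken by `σ`, i.e. `f ∘ σ` must increase strictly at each descent of `σ` and
may stay constant at its ascents. Adding to the `i`-th value the number of ascents of `σ` before
`i` turns these sequences bijectively into strictly increasing maps `Fin n → Fin (x + asc σ)`,
of which there are `C(x + asc σ, n)`. Summing Worpitzky's identity over `x = 1, …, m` and using
the hockey-stick identity `∑_{1 ≤ i ≤ m} C(i + k, n) = C(m + k + 1, n + 1)` gives the theorem.
-/

open Finset

section StepwiseMono

variable {n : ℕ} (W : Finset (Fin n))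

def StepwiseMono {α : Type*} [Preorder α] (g : Fin (n + 1) → α) : Prop :=
  ∀ i, if i ∈ W then g i.castSucc ≤ g i.succ else g i.castSucc < g i.succ

def weakBelow (i : Fin (n + 1)) : ℕ := #{j ∈ W | j.castSucc < i}

variable {W}

theorem StepwiseMono.monotone {α : Type*} [Preorder α] {g : Fin (n + 1) → α}
    (hg : StepwiseMono W g) : Monotone g :=
  Fin.monotone_iff_le_succ.2 fun i => by
    have := hg i
    split_ifs at this
    exacts [this, this.le]

variable (W)

@[simp]
theorem weakBelow_zero : weakBelow W 0 = 0 := by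
  simp [weakBelow]

theorem weakBelow_succ (i : Fin n) :
    weakBelow W i.succ = weakBelow W i.castSucc + if i ∈ W then 1 else 0 := by
  simp only [weakBelow, Fin.castSucc_lt_succ_iff, Fin.castSucc_lt_castSucc_iff]
  split_ifs with hi
  · rw [← card_insert_of_notMem (s := {j ∈ W | j < i}) (a := i) (by simp)]
    congr 1
    ext j
    simp only [mem_filter, mem_insert, le_iff_lt_or_eq]
    aesop
  · congr 1
    ext j
    simp only [mem_filter, le_iff_lt_or_eq]
    aesop

@[simp]
theorem weakBelow_last : weakBelow W (Fin.last n) = #W := by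
  simp [weakBelow, Fin.castSucc_lt_last]

theorem weakBelow_le_card (i : Fin (n + 1)) : weakBelow W i ≤ #W :=
  card_filter_le _ _

theorem weakBelow_le_of_strictMono {h : Fin (n + 1) → ℕ} (hh : StrictMono h) (i : Fin (n + 1)) :
    weakBelow W i ≤ h i := by
  induction i using Fin.induction with
  | zero => simp
  | succ i ih =>
    have := hh i.castSucc_lt_succ
    rw [weakBelow_succ]
    split_ifs <;> omega

theorem stepwiseMono_iff_strictMono_add_weakBelow {g : Fin (n + 1) → ℕ} :
    StepwiseMono W g ↔ StrictMono fun i => g i + weakBelow W i := by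
  rw [Fin.strictMono_iff_lt_succ]
  refine forall_congr' fun i => ?_
  rw [weakBelow_succ]
  split_ifs <;> omega

theorem stepwiseMono_sub_weakBelow {h : Fin (n + 1) → ℕ} (hh : StrictMono h) :
    StepwiseMono W fun i => h i - weakBelow W i := by
  rw [stepwiseMono_iff_strictMono_add_weakBelow]
  simpa only [Nat.sub_add_cancel (weakBelow_le_of_strictMono W hh _)] using hh

theorem sub_weakBelow_lt {x : ℕ} {h : Fin (n + 1) → Fin (x + #W)} (hh : StrictMono h)
    (i : Fin (n + 1)) : h i - weakBelow W i < x := by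
  have hlast : (h i : ℕ) - weakBelow W i ≤ h (Fin.last n) - #W := by
    simpa using (stepwiseMono_sub_weakBelow W (h := fun i => h i) hh).monotone (Fin.le_last i)
  have hW : #W ≤ h (Fin.last n) := by
    simpa using weakBelow_le_of_strictMono W (h := fun i => h i) hh (Fin.last n)
  have := (h (Fin.last n)).isLt
  omega

def stepwiseMonoEquiv (x : ℕ) :
    {g : Fin (n + 1) → Fin x // StepwiseMono W g} ≃ (Fin (n + 1) ↪o Fin (x + #W)) where
  toFun g := OrderEmbedding.ofStrictMono
    (fun i => ⟨g.1 i + weakBelow W i, add_lt_add_of_lt_of_le (g.1 i).isLt (weakBelow_le_card W i)⟩)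
    ((stepwiseMono_iff_strictMono_add_weakBelow W).1 g.2)
  invFun h := ⟨fun i => ⟨h i - weakBelow W i, sub_weakBelow_lt W h.strictMono i⟩,
    stepwiseMono_sub_weakBelow W (h := fun i => h i) h.strictMono⟩
  left_inv g := by
    ext i
    exact Nat.add_sub_cancel ..
  right_inv h := by
    ext i
    exact Nat.sub_add_cancel (weakBelow_le_of_strictMono W (h := fun i => h i) h.strictMono i)

theorem card_stepwiseMono (x : ℕ) :
    Nat.card {g : Fin (n + 1) → Fin x // StepwiseMono W g} = (x + #W).choose (n + 1) := by
  rw [Nat.card_congr ((stepwiseMonoEquiv W x).trans Set.powersetCard.ofFinEmbEquiv),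
    Set.powersetCard.card, Nat.card_fin]

end StepwiseMono

section Ascents

variable {n : ℕ}

def ascents (σ : Equiv.Perm (Fin (n + 1))) : Finset (Fin n) :=
  {i | σ i.castSucc < σ i.succ}

theorem ascentCount_eq_card_ascents (σ : Equiv.Perm (Fin (n + 1))) :
    ascentCount σ = #(ascents σ) := by
  rw [ascentCount, ← card_map Fin.valEmbedding]
  congr 1
  ext j
  simp only [ascents, mem_filter, mem_univ, true_and, mem_range, mem_map, Fin.valEmbedding_apply]
  constructor
  · rintro ⟨hj, _, hlt⟩
    exact ⟨⟨j, hj⟩, hlt, rfl⟩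
  · rintro ⟨j, h, rfl⟩
    exact ⟨j.isLt, Nat.succ_lt_succ j.isLt, h⟩

theorem ascentCount_le (σ : Equiv.Perm (Fin (n + 1))) : ascentCount σ ≤ n := by
  simpa [ascentCount_eq_card_ascents] using card_le_univ (ascents σ)

theorem Tuple.sort_eq_iff_stepwiseMono {α : Type*} [LinearOrder α] (f : Fin (n + 1) → α)
    (σ : Equiv.Perm (Fin (n + 1))) : Tuple.sort f = σ ↔ StepwiseMono (ascents σ) (f ∘ σ) := by
  rw [eq_comm, Tuple.eq_sort_iff', Fin.strictMono_iff_lt_succ]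
  refine forall_congr' fun i => ?_
  change toLex (f (σ i.castSucc), σ i.castSucc) < toLex (f (σ i.succ), σ i.succ) ↔ _
  simp only [Prod.Lex.toLex_lt_toLex, Function.comp_apply, ascents, mem_filter, mem_univ, true_and]
  split_ifs with hasc <;> simp [hasc, le_iff_lt_or_eq]

end Ascents

section Worpitzky

variable {n : ℕ}

theorem card_sort_eq_choose (x : ℕ) (σ : Equiv.Perm (Fin (n + 1))) :
    Nat.card {f : Fin (n + 1) → Fin x // Tuple.sort f = σ} = (x + ascentCount σ).choose (n + 1) := by
  rw [ascentCount_eq_card_ascents, ← card_stepwiseMono]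
  exact Nat.card_congr <| (σ.symm.arrowCongr (Equiv.refl _)).subtypeEquiv fun f =>
    Tuple.sort_eq_iff_stepwiseMono f σ

theorem pow_succ_eq_sum_perm_choose (x : ℕ) :
    x ^ (n + 1) = ∑ σ : Equiv.Perm (Fin (n + 1)), (x + ascentCount σ).choose (n + 1) := by
  simp_rw [← card_sort_eq_choose]
  rw [← Nat.card_sigma, Nat.card_congr (Equiv.sigmaFiberEquiv Tuple.sort)]
  simp

theorem sum_ascentCount_eq_sum_eulerian_smul {M : Type*} [AddCommMonoid M] (F : ℕ → M) :
    ∑ σ : Equiv.Perm (Fin (n + 1)), F (ascentCount σ) =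
      ∑ k ∈ range (n + 1), eulerian (n + 1) k • F k := by
  rw [← sum_fiberwise_of_maps_to (g := ascentCount) (t := range (n + 1))
    fun σ _ => mem_range.2 (Nat.lt_succ_of_le (ascentCount_le σ))]
  refine sum_congr rfl fun k _ => ?_
  rw [sum_congr rfl fun σ hσ => congrArg F (mem_filter.1 hσ).2, sum_const, eulerian]

theorem pow_succ_eq_sum_eulerian_mul_choose (x : ℕ) :
    x ^ (n + 1) = ∑ k ∈ range (n + 1), eulerian (n + 1) k * (x + k).choose (n + 1) := by
  rw [pow_succ_eq_sum_perm_choose, sum_ascentCount_eq_sum_eulerian_smul fun k => (x + k).choose (n + 1)]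
  rfl

end Worpitzky

theorem sum_Icc_choose_add (m k n : ℕ) (hk : k < n) :
    ∑ i ∈ Icc 1 m, (i + k).choose n = (m + k + 1).choose (n + 1) := by
  induction m with
  | zero => simp [Nat.choose_eq_zero_of_lt (Nat.succ_lt_succ hk)]
  | succ m ih =>
    rw [sum_Icc_succ_top (Nat.le_add_left 1 m), ih, show m + 1 + k = m + k + 1 by omega,
      Nat.choose_succ_succ' (m + k + 1) n, add_comm]

theorem sum_pow_eq_sum_eulerian_choose_general (m n : ℕ) (hn : 1 ≤ n) :
    ∑ i ∈ Finset.Icc 1 m, i ^ n =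
      ∑ k ∈ Finset.range n, eulerian n k * Nat.choose (m + k + 1) (n + 1) := by
  obtain ⟨n, rfl⟩ := Nat.exists_eq_add_of_le' hn
  calc ∑ i ∈ Icc 1 m, i ^ (n + 1)
      = ∑ i ∈ Icc 1 m, ∑ k ∈ range (n + 1), eulerian (n + 1) k * (i + k).choose (n + 1) :=
        sum_congr rfl fun i _ => pow_succ_eq_sum_eulerian_mul_choose i
    _ = ∑ k ∈ range (n + 1), eulerian (n + 1) k * ∑ i ∈ Icc 1 m, (i + k).choose (n + 1) := by
        simp_rw [mul_sum]
        exact sum_comm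
    _ = _ := sum_congr rfl fun k hk => by rw [sum_Icc_choose_add m k _ (mem_range.1 hk)]

/-- `∑_{i=1}^m i^n = ∑_{k=0}^{n-1} A_{n,k} C(m+k+1, n+1)`. -/
theorem sum_pow_eq_sum_eulerian_choose (m n : ℕ) (hm : 1 ≤ m) (hn : 1 ≤ n) :
    ∑ i ∈ Finset.Icc 1 m, i ^ n =
      ∑ k ∈ Finset.range n, eulerian n k * Nat.choose (m + k + 1) (n + 1) :=
  sum_pow_eq_sum_eulerian_choose_general m n hn
end

section
/- (Worpitzky's identity) For every positive integer n and every positive integer x, x^n = ∑_{k=0}^{n-1} A_{n,k} · C(x+k, n), where C denotes the binomial coefficient. -/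
open scoped Classical

/-!
Count the maps `f : Fin n → Fin x` according to the permutation `σ = Tuple.sort f` that sorts
them stably. Then `f ∘ σ` is weakly increasing and can stay constant only across an ascent of
`σ`; adding to its `i`-th value the number of ascents of `σ` before `i` therefore turns it into
a strictly increasing map `Fin n → Fin (x + asc σ)`, and this is a bijection. So exactly
`C(x + asc σ, n)` maps are sorted by `σ`, and summing over `σ` gives the identity.
-/

open Finset

noncomputable def ascentSet {n : ℕ} (σ : Equiv.Perm (Fin n)) : Finset ℕ :=
  {j ∈ range (n - 1) | ∃ h : j + 1 < n, σ ⟨j, Nat.lt_of_succ_lt h⟩ < σ ⟨j + 1, h⟩}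

theorem card_ascentSet {n : ℕ} (σ : Equiv.Perm (Fin n)) : #(ascentSet σ) = ascentCount σ := rfl

theorem ascentSet_subset_range {n : ℕ} (σ : Equiv.Perm (Fin n)) :
    ascentSet σ ⊆ range (n - 1) :=
  filter_subset _ _

theorem mem_ascentSet_iff {m : ℕ} {σ : Equiv.Perm (Fin (m + 1))} (i : Fin m) :
    (i : ℕ) ∈ ascentSet σ ↔ σ i.castSucc < σ i.succ := by
  simp [ascentSet, Fin.castSucc, Fin.succ, Fin.castAdd, Fin.castLE]

theorem ascentCount_lt {n : ℕ} (hn : 0 < n) (σ : Equiv.Perm (Fin n)) : ascentCount σ < n := by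
  have := card_le_card (ascentSet_subset_range σ)
  rw [card_ascentSet, card_range] at this
  omega

theorem sum_perm_eq_sum_eulerian_smul {M : Type*} [AddCommMonoid M] {n : ℕ} (hn : 0 < n)
    (F : ℕ → M) :
    ∑ σ : Equiv.Perm (Fin n), F (ascentCount σ) = ∑ k ∈ range n, eulerian n k • F k := by
  rw [← sum_fiberwise_of_maps_to (g := ascentCount) (t := range n)
    fun σ _ => mem_range.mpr (ascentCount_lt hn σ)]
  refine sum_congr rfl fun k _ => ?_
  rw [sum_congr rfl fun σ hσ => congrArg F (mem_filter.mp hσ).2, sum_const]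
  rfl

def countBelow (A : Finset ℕ) (i : ℕ) : ℕ := #(A ∩ range i)

theorem countBelow_le (A : Finset ℕ) (i : ℕ) : countBelow A i ≤ i :=
  (card_le_card inter_subset_right).trans (card_range i).le

theorem countBelow_le_card (A : Finset ℕ) (i : ℕ) : countBelow A i ≤ #A :=
  card_le_card inter_subset_left

theorem countBelow_succ (A : Finset ℕ) (i : ℕ) :
    countBelow A (i + 1) = countBelow A i + if i ∈ A then 1 else 0 := by
  unfold countBelow
  split_ifs with hi
  · rw [range_add_one, inter_insert_of_mem hi, card_insert_of_notMem (by simp)]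
  · rw [range_add_one, inter_insert_of_notMem hi, add_zero]

theorem card_le_countBelow_add {A : Finset ℕ} {m : ℕ} (hA : A ⊆ range m) (i : ℕ) :
    #A ≤ countBelow A i + (m - i) := by
  have hsplit : A ⊆ (A ∩ range i) ∪ Ico i m := fun j hj => by
    have := mem_range.mp (hA hj)
    simp only [mem_union, mem_inter, mem_range, mem_Ico, hj, true_and]
    omega
  calc #A ≤ #((A ∩ range i) ∪ Ico i m) := card_le_card hsplit
    _ ≤ countBelow A i + (m - i) := by
      simpa [countBelow] using card_union_le (A ∩ range i) (Ico i m)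

theorem Fin.val_le_val_orderEmbedding {n M : ℕ} (g : Fin n ↪o Fin M) (i : Fin n) :
    (i : ℕ) ≤ g i := by
  simpa using card_le_card_of_injOn g (s := Iio i) (t := Iio (g i))
    (fun j hj => by simpa using hj) g.injective.injOn

theorem Fin.val_orderEmbedding_add_le {n M : ℕ} (g : Fin n ↪o Fin M) (i : Fin n) :
    (g i : ℕ) + (n - i) ≤ M := by
  have := card_le_card_of_injOn g (s := Ici i) (t := Ici (g i))
    (fun j hj => by simpa using hj) g.injective.injOn
  simp only [Fin.card_Ici] at this
  omega

theorem Nat.card_orderEmbedding_fin (n M : ℕ) : Nat.card (Fin n ↪o Fin M) = M.choose n := by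
  rw [Nat.card_congr Set.powersetCard.ofFinEmbEquiv, Set.powersetCard.card, Nat.card_fin]

theorem Tuple.sort_eq_iff_strictMono_add_countBelow {m x : ℕ} {f : Fin (m + 1) → Fin x}
    {σ : Equiv.Perm (Fin (m + 1))} :
    Tuple.sort f = σ ↔ StrictMono fun i => (f (σ i) : ℕ) + countBelow (ascentSet σ) i := by
  rw [eq_comm, Tuple.eq_sort_iff', Fin.strictMono_iff_lt_succ, Fin.strictMono_iff_lt_succ]
  refine forall_congr' fun i => ?_
  change toLex (f (σ i.castSucc), σ i.castSucc) < toLex (f (σ i.succ), σ i.succ) ↔ _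
  rw [Prod.Lex.toLex_lt_toLex, Fin.val_succ, Fin.val_castSucc, countBelow_succ, Fin.lt_def,
    Fin.ext_iff]
  dsimp only
  split_ifs with h <;> rw [mem_ascentSet_iff, Fin.lt_def] at h <;> omega

def addCountBelowEquiv {m x : ℕ} {A : Finset ℕ} (hA : A ⊆ range m) :
    {u : Fin (m + 1) → Fin x // StrictMono fun i => (u i : ℕ) + countBelow A i} ≃
      (Fin (m + 1) ↪o Fin (x + #A)) where
  toFun u := OrderEmbedding.ofStrictMono
    (fun i => ⟨u.1 i + countBelow A i, by
      have := (u.1 i).2; have := countBelow_le_card A i; omega⟩)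
    fun i j hij => by simpa [Fin.lt_def] using u.2 hij
  invFun g := ⟨fun i => ⟨g i - countBelow A i, by
      -- `g i + (m + 1 - i) ≤ x + #A ≤ x + countBelow A i + (m - i)`
      have := Fin.val_orderEmbedding_add_le g i
      have := card_le_countBelow_add hA i
      have := countBelow_le A i; have := Fin.val_le_val_orderEmbedding g i
      omega⟩, fun i j hij => by
      have := countBelow_le A i; have := Fin.val_le_val_orderEmbedding g i
      have := countBelow_le A j; have := Fin.val_le_val_orderEmbedding g j
      have : (g i : ℕ) < g j := g.strictMono hij
      simp only
      omega⟩
  left_inv u := Subtype.ext <| funext fun i => Fin.ext <| Nat.add_sub_cancel _ _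
  right_inv g := RelEmbedding.ext fun i => Fin.ext <|
    Nat.sub_add_cancel <| (countBelow_le A i).trans (Fin.val_le_val_orderEmbedding g i)

theorem Tuple.card_sort_fiber {m x : ℕ} (σ : Equiv.Perm (Fin (m + 1))) :
    Nat.card {f : Fin (m + 1) → Fin x // Tuple.sort f = σ} =
      (x + ascentCount σ).choose (m + 1) := by
  rw [← Nat.card_orderEmbedding_fin, ← card_ascentSet]
  exact Nat.card_congr <|
    ((σ.symm.arrowCongr (Equiv.refl _)).subtypeEquiv fun _ =>
      Tuple.sort_eq_iff_strictMono_add_countBelow).trans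
    (addCountBelowEquiv (ascentSet_subset_range σ))

theorem worpitzky_general (n x : ℕ) (hn : 1 ≤ n) :
    x ^ n = ∑ k ∈ Finset.range n, eulerian n k * Nat.choose (x + k) n := by
  obtain ⟨m, rfl⟩ : ∃ m, n = m + 1 := ⟨n - 1, by omega⟩
  calc x ^ (m + 1) = Nat.card (Fin (m + 1) → Fin x) := by
        rw [Nat.card_fun, Nat.card_fin, Nat.card_fin]
    _ = ∑ σ : Equiv.Perm (Fin (m + 1)),
          Nat.card {f : Fin (m + 1) → Fin x // Tuple.sort f = σ} := by
        rw [← Nat.card_sigma, Nat.card_congr (Equiv.sigmaFiberEquiv _)]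
    _ = ∑ σ : Equiv.Perm (Fin (m + 1)), (x + ascentCount σ).choose (m + 1) := by
        simp only [Tuple.card_sort_fiber]
    _ = ∑ k ∈ range (m + 1), eulerian (m + 1) k * (x + k).choose (m + 1) :=
        sum_perm_eq_sum_eulerian_smul m.succ_pos fun k => (x + k).choose (m + 1)

/-- Worpitzky's identity: `x^n = ∑_{k=0}^{n-1} A_{n,k} C(x+k, n)`. -/
theorem worpitzky (n x : ℕ) (hn : 1 ≤ n) (hx : 1 ≤ x) :
    x ^ n = ∑ k ∈ Finset.range n, eulerian n k * Nat.choose (x + k) n :=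
  worpitzky_general n x hn
end

section
/- For every positive integer n and every integer k with 0 ≤ k ≤ n-1, the Eulerian number is given by the explicit formula A_{n,k} = ∑_{i=0}^{k} (-1)^i (k-i+1)^n C(n+1, i), where C denotes the binomial coefficient. -/
open scoped Classical

/-!
Worpitzky's identity `x ^ n = ∑ w, C(x + asc w, n)` comes from sorting: a map `f : Fin n → Fin x`
is determined by its stable sorting permutation `w` and the weakly increasing sequence `f ∘ w`,
which can stay constant only across ascents of `w`. Adding the number of ascents of `w` before each
position makes that sequence strictly increasing with values below `x + asc w`, and there are
`C(x + asc w, n)` of those.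

Substituting `x = k + 1 - i` into the alternating sum and exchanging the sums leaves, for each `w`,
`∑ i, (-1)^i C(n+1, i) C(k+1+asc w-i, n)`, a coefficient of `(1 - X)^(n+1) ∑ m, C(m, n) X^m = X^n`;
so exactly the permutations with `n - 1 - k` ascents survive. Reversing the values turns ascents
into descents, whence `A_{n,n-1-k} = A_{n,k}`.
-/

open Finset Nat Equiv

namespace PowerSeries

theorem coeff_one_sub_X_pow (R : Type*) [CommRing R] (m i : ℕ) :
    coeff i ((1 - X : R⟦X⟧) ^ m) = (-1) ^ i * m.choose i := by
  have : (1 - X : R⟦X⟧) ^ m = rescale (-1) (((1 + Polynomial.X) ^ m : Polynomial R) : R⟦X⟧) := by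
    simp [sub_eq_add_neg]
  rw [this, coeff_rescale, Polynomial.coeff_coe, Polynomial.coeff_one_add_X_pow]

theorem mk_choose_mul_one_sub_X_pow (R : Type*) [CommRing R] (n : ℕ) :
    mk (fun m => (m.choose n : R)) * (1 - X) ^ (n + 1) = X ^ n := by
  have : mk (fun m => (m.choose n : R)) = X ^ n * mk fun m => ((n + m).choose n : R) := by
    ext m
    rw [coeff_mk, coeff_X_pow_mul', coeff_mk]
    split_ifs with h
    · rw [Nat.add_sub_cancel' h]
    · rw [Nat.choose_eq_zero_of_lt (not_le.1 h), Nat.cast_zero]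
  rw [this, mul_assoc, mk_add_choose_mul_one_sub_pow_eq_one, mul_one]

end PowerSeries

theorem sum_range_neg_one_pow_mul_choose_mul_choose (R : Type*) [CommRing R] (n m : ℕ) :
    ∑ i ∈ range (m + 1), (-1 : R) ^ i * (n + 1).choose i * (m - i).choose n =
      if m = n then 1 else 0 := by
  have := congrArg (PowerSeries.coeff m) (PowerSeries.mk_choose_mul_one_sub_X_pow R n)
  rw [mul_comm, PowerSeries.coeff_mul, Nat.sum_antidiagonal_eq_sum_range_succ_mk,
    PowerSeries.coeff_X_pow] at this
  rw [← this]
  refine sum_congr rfl fun i _ => ?_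
  rw [PowerSeries.coeff_one_sub_X_pow, PowerSeries.coeff_mk]

theorem sum_range_neg_one_pow_mul_choose_mul_choose_of_lt (R : Type*) [CommRing R] {n m l : ℕ}
    (hl : l ≤ m + 1) (hm : m < n + l) :
    ∑ i ∈ range l, (-1 : R) ^ i * (n + 1).choose i * (m - i).choose n =
      if m = n then 1 else 0 := by
  rw [← sum_range_neg_one_pow_mul_choose_mul_choose]
  refine sum_subset (range_subset_range.2 hl) fun i hi hil => ?_
  rw [mem_range] at hi hil
  rw [Nat.choose_eq_zero_of_lt (n := m - i) (k := n) (by omega), Nat.cast_zero, mul_zero]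

theorem StrictMono.add_sub_le {n : ℕ} {f : Fin n → ℕ} (hf : StrictMono f) {i j : Fin n}
    (hij : i ≤ j) : f i + (j - i : ℕ) ≤ f j := by
  have := card_le_card_of_injOn f (s := Icc i j) (t := Icc (f i) (f j))
    (fun k hk => by
      rw [coe_Icc, Set.mem_Icc] at hk
      exact mem_coe.2 (mem_Icc.2 ⟨hf.monotone hk.1, hf.monotone hk.2⟩))
    hf.injective.injOn
  rw [Fin.card_Icc, Nat.card_Icc] at this
  omega

theorem card_filter_strictMono (a b : ℕ) : #{f : Fin a → Fin b | StrictMono f} = b.choose a := by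
  let e : {f : Fin a → Fin b // StrictMono f} ≃ (Fin a ↪o Fin b) :=
    { toFun f := OrderEmbedding.ofStrictMono f.1 f.2
      invFun e := ⟨e, e.strictMono⟩ }
  rw [← Fintype.card_subtype, Fintype.card_congr e, ← Nat.card_eq_fintype_card,
    Nat.card_congr Set.powersetCard.ofFinEmbEquiv, Set.powersetCard.card, Nat.card_eq_fintype_card,
    Fintype.card_fin]

section count

variable (p : ℕ → Prop) [DecidablePred p]

theorem Nat.count_le_count_add_sub {i j : ℕ} (hij : i ≤ j) : count p j ≤ count p i + (j - i) := by
  obtain ⟨d, rfl⟩ := Nat.exists_eq_add_of_le hij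
  rw [count_add, Nat.add_sub_cancel_left]
  exact Nat.add_le_add_left (count_le _) _

theorem card_strictMono_add_count (n x : ℕ) :
    #{g : Fin n → Fin x | StrictMono fun j => (g j : ℕ) + count p j} =
      (x + count p (n - 1)).choose n := by
  have bounds {h : Fin n → Fin (x + count p (n - 1))} (hh : StrictMono h) (j : Fin n) :
      count p j ≤ h j ∧ h j < x + count p j := by
    have hj := j.isLt
    have hh' : StrictMono fun i => (h i : ℕ) := Fin.val_strictMono.comp hh
    have hfirst := hh'.add_sub_le (i := ⟨0, by omega⟩) (j := j) (Nat.zero_le _)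
    have hlast := hh'.add_sub_le (i := j) (j := ⟨n - 1, by omega⟩) (Nat.le_sub_one_of_lt hj)
    have := Nat.count_le_count_add_sub p (Nat.le_sub_one_of_lt hj)
    have := (h ⟨n - 1, by omega⟩).isLt
    have := count_le p (n := j)
    simp only at hfirst hlast
    omega
  rw [← card_filter_strictMono]
  refine card_bij' (fun g _ j => ⟨g j + count p j, ?_⟩) (fun h hh j => ⟨h j - count p j, ?_⟩)
    ?_ ?_ ?_ ?_
  · exact Nat.add_lt_add_of_lt_of_le (g j).isLt (count_monotone p (by omega))
  · rw [mem_filter] at hh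
    have := bounds hh.2 j
    omega
  · intro g hg
    rw [mem_filter] at hg ⊢
    exact ⟨mem_univ _, fun _ _ hij => hg.2 hij⟩
  · intro h hh
    rw [mem_filter] at hh ⊢
    refine ⟨mem_univ _, fun i j hij => ?_⟩
    simp only [Nat.sub_add_cancel (bounds hh.2 _).1]
    exact hh.2 hij
  · intro g _
    ext j
    simp
  · intro h hh
    rw [mem_filter] at hh
    ext j
    simp [Nat.sub_add_cancel (bounds hh.2 _).1]

end count

section Ascents

variable {n : ℕ}

def IsAscent (w : Perm (Fin n)) (j : ℕ) : Prop :=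
  ∃ h : j + 1 < n, w ⟨j, Nat.lt_of_succ_lt h⟩ < w ⟨j + 1, h⟩

theorem ascentCount_eq_count (w : Perm (Fin n)) :
    ascentCount w = count (IsAscent w) (n - 1) := by
  rw [count_eq_card_filter_range, ascentCount]
  exact congrArg card (filter_congr fun _ _ => Iff.rfl)

theorem ascentCount_le_s3 (w : Perm (Fin n)) : ascentCount w ≤ n - 1 :=
  ascentCount_eq_count w ▸ count_le _

theorem isAscent_coe_iff {m : ℕ} (w : Perm (Fin (m + 1))) (i : Fin m) :
    IsAscent w i ↔ w i.castSucc < w i.succ :=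
  exists_prop_of_true (by omega)

theorem sort_eq_iff_strictMono_add_count {x : ℕ} (f : Fin n → Fin x) (w : Perm (Fin n)) :
    Tuple.sort f = w ↔ StrictMono fun j => (f (w j) : ℕ) + count (IsAscent w) j := by
  rw [eq_comm, Tuple.eq_sort_iff']
  cases n with
  | zero => exact iff_of_true (fun i => i.elim0) (fun i => i.elim0)
  | succ m =>
    simp only [Fin.strictMono_iff_lt_succ]
    refine forall_congr' fun i => ?_
    simp only [Equiv.trans_apply, Tuple.graphEquiv₁, Equiv.coe_fn_mk,
      Fin.val_succ, count_succ, Fin.val_castSucc, isAscent_coe_iff]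
    refine Prod.Lex.toLex_lt_toLex.trans ?_
    simp only [Fin.lt_def, Fin.ext_iff]
    split_ifs <;> omega

theorem card_sort_eq {x : ℕ} (w : Perm (Fin n)) :
    #{f : Fin n → Fin x | Tuple.sort f = w} = (x + ascentCount w).choose n := by
  rw [ascentCount_eq_count, ← card_strictMono_add_count]
  refine card_nbij' (· ∘ w) (· ∘ w.symm) (fun f hf => ?_) (fun g hg => ?_) (fun f _ => ?_)
    (fun g _ => ?_)
  · simpa [sort_eq_iff_strictMono_add_count] using hf
  · simpa [sort_eq_iff_strictMono_add_count, Function.comp_def] using hg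
  · simp [Function.comp_def]
  · simp [Function.comp_def]

theorem sum_choose_add_ascentCount (n x : ℕ) :
    ∑ w : Perm (Fin n), (x + ascentCount w).choose n = x ^ n := by
  simp_rw [← card_sort_eq]
  rw [← card_eq_sum_card_fiberwise fun f _ => mem_univ (Tuple.sort f), Finset.card_univ,
    Fintype.card_fun, Fintype.card_fin, Fintype.card_fin]

theorem isAscent_revPerm_mul_iff (w : Perm (Fin n)) {j : ℕ} (hj : j + 1 < n) :
    IsAscent (Fin.revPerm * w) j ↔ ¬ IsAscent w j := by
  simp only [IsAscent, exists_prop_of_true hj, Perm.mul_apply, Fin.revPerm_apply, Fin.rev_lt_rev,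
    not_lt]
  exact lt_iff_le_and_ne.trans (and_iff_left (w.injective.ne (by simp [Fin.ext_iff])))

theorem ascentCount_revPerm_mul (w : Perm (Fin n)) :
    ascentCount (Fin.revPerm * w) = n - 1 - ascentCount w := by
  have hsplit : #{j ∈ range (n - 1) | IsAscent w j} + #{j ∈ range (n - 1) | ¬ IsAscent w j} =
      n - 1 := by
    rw [card_filter_add_card_filter_not, card_range]
  have hrev : #{j ∈ range (n - 1) | IsAscent (Fin.revPerm * w) j} =
      #{j ∈ range (n - 1) | ¬ IsAscent w j} :=
    congrArg card (filter_congr fun j hj => isAscent_revPerm_mul_iff w (by simp at hj; omega))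
  rw [ascentCount_eq_count, ascentCount_eq_count, count_eq_card_filter_range,
    count_eq_card_filter_range, hrev]
  omega

theorem eulerian_eq_eulerian_sub {n k : ℕ} (hk : k ≤ n - 1) :
    eulerian n k = eulerian n (n - 1 - k) := by
  refine card_equiv (Equiv.mulLeft Fin.revPerm) fun w => ?_
  simp only [mem_filter, mem_univ, true_and, Equiv.coe_mulLeft, ascentCount_revPerm_mul]
  have := ascentCount_le_s3 w
  omega

end Ascents

/-- Explicit formula for the Eulerian numbers:
`A_{n,k} = ∑_{i=0}^k (-1)^i (k-i+1)^n C(n+1, i)` for `0 ≤ k ≤ n-1`. -/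
theorem eulerian_explicit (n k : ℕ) (hn : 1 ≤ n) (hk : k ≤ n - 1) :
    (eulerian n k : ℤ) =
      ∑ i ∈ Finset.range (k + 1),
        (-1 : ℤ) ^ i * ((k : ℤ) - i + 1) ^ n * ((n + 1).choose i) := by
  calc (eulerian n k : ℤ)
      = eulerian n (n - 1 - k) := by rw [eulerian_eq_eulerian_sub hk]
    _ = ∑ w : Perm (Fin n), if k + 1 + ascentCount w = n then 1 else 0 := by
      rw [eulerian, sum_boole]
      congr 3
      ext w
      omega
    _ = ∑ w : Perm (Fin n), ∑ i ∈ range (k + 1),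
          (-1 : ℤ) ^ i * (n + 1).choose i * (k + 1 + ascentCount w - i).choose n := by
      refine sum_congr rfl fun w _ => ?_
      have := ascentCount_le_s3 w
      rw [sum_range_neg_one_pow_mul_choose_mul_choose_of_lt ℤ (by omega) (by omega)]
    _ = ∑ i ∈ range (k + 1), (-1 : ℤ) ^ i * (n + 1).choose i *
          (∑ w : Perm (Fin n), (k + 1 - i + ascentCount w).choose n : ℕ) := by
      rw [sum_comm]
      refine sum_congr rfl fun i hi => ?_
      rw [Nat.cast_sum, mul_sum]
      refine sum_congr rfl fun w _ => ?_
      rw [mem_range] at hi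
      rw [Nat.sub_add_comm (by omega)]
    _ = _ := by
      refine sum_congr rfl fun i hi => ?_
      rw [mem_range] at hi
      rw [sum_choose_add_ascentCount, Nat.cast_pow, Nat.cast_sub (by omega)]
      push_cast
      ring
end

section
/- (General Worpitzky identity) Let a, d be real numbers. For every positive integer n and every positive integer i, (a + (i-1)d)^n = ∑_{j=-1}^{n-1} A_{n,j}(a,d) · C(i+j, n), where C denotes the binomial coefficient. -/
/-- General Eulerian numbers `A_{n,k}(a,d)` for the arithmetic progression
`a, a+d, a+2d, …`: `A_{0,-1}(a,d) = 1`, `A_{n,k}(a,d) = 0` for `k ≥ n` or `k ≤ -2`, and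
`A_{n,k}(a,d) = (-a+(k+2)d) A_{n-1,k}(a,d) + (a+(n-k-1)d) A_{n-1,k-1}(a,d)` for `n ≥ 1`. -/
noncomputable def genEulerian (a d : ℝ) : ℕ → ℤ → ℝ
  | 0, k => if k = -1 then 1 else 0
  | (n + 1), k =>
      if ((n : ℤ) + 1 ≤ k ∨ k ≤ -2) then 0
      else (-a + ((k : ℝ) + 2) * d) * genEulerian a d n k
        + (a + (((n : ℝ) + 1) - (k : ℝ) - 1) * d) * genEulerian a d n (k - 1)

/-- General Eulerian polynomial `T_n(t,a,d) = ∑_{k=-1}^{n-1} A_{n,k}(a,d) t^{k+1}`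
(which equals `1` when `n = 0`). -/
noncomputable def genEulerianPoly (n : ℕ) (t a d : ℝ) : ℝ :=
  ∑ k ∈ Finset.range (n + 1), genEulerian a d n ((k : ℤ) - 1) * t ^ k

lemma genE_hi (a d : ℝ) (n : ℕ) (k : ℤ) (h : (n:ℤ) ≤ k) : genEulerian a d n k = 0 := by
  cases n with
  | zero => simp only [genEulerian]; rw [if_neg]; omega
  | succ n => simp only [genEulerian]; rw [if_pos]; left; omega

lemma genE_lo (a d : ℝ) (n : ℕ) (k : ℤ) (h : k ≤ -2) : genEulerian a d n k = 0 := by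
  cases n with
  | zero => simp only [genEulerian]; rw [if_neg]; omega
  | succ n => simp only [genEulerian]; rw [if_pos]; right; omega

lemma key1 (m n : ℕ) : (m.choose (n+1) : ℝ) * ((n:ℝ)+1) = (m.choose n : ℝ) * ((m:ℝ) - n) := by
  rcases le_or_gt n m with h|h
  · have h0 := Nat.choose_succ_right_eq m n
    have h1 : ((m.choose (n+1) : ℕ) : ℝ) * ((n:ℝ)+1) = ((m.choose n : ℕ) : ℝ) * ((m:ℝ)-(n:ℝ)) := by
      exact_mod_cast h0
    push_cast [h] at h1
    linarith
  · have h1 : m.choose n = 0 := Nat.choose_eq_zero_of_lt h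
    have h2 : m.choose (n+1) = 0 := Nat.choose_eq_zero_of_lt (h.trans (Nat.lt_succ_self n))
    simp [h1, h2]

lemma key2 (m n : ℕ) : ((m+1).choose (n+1) : ℝ) * ((n:ℝ)+1) = (m.choose n : ℝ) * ((m:ℝ) + 1) := by
  have h0 := Nat.add_one_mul_choose_eq m n
  have h1 : ((m:ℝ)+1) * (m.choose n : ℝ) = ((m+1).choose (n+1) : ℝ) * ((n:ℝ)+1) := by
    exact_mod_cast h0
  push_cast at h1
  linarith

lemma keystep (a d : ℝ) (n m j : ℕ) :
    (-a + ((j:ℝ)+1)*d) * (m.choose (n+1) : ℝ) + (a + ((n:ℝ)-j)*d) * ((m+1).choose (n+1) : ℝ)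
      = (a + ((m:ℝ) - j)*d) * (m.choose n : ℝ) := by
  have hn1 : ((n:ℝ)+1) ≠ 0 := by positivity
  have e1 : (m.choose (n+1) : ℝ) = (m.choose n : ℝ) * ((m:ℝ) - n) / ((n:ℝ)+1) := by
    field_simp; linarith [key1 m n]
  have e2 : ((m+1).choose (n+1) : ℝ) = (m.choose n : ℝ) * ((m:ℝ) + 1) / ((n:ℝ)+1) := by
    field_simp; linarith [key2 m n]
  rw [e1, e2]
  field_simp
  ring

lemma worp (a d : ℝ) (n : ℕ) : ∀ i : ℕ, 1 ≤ i →
    (a + ((i : ℝ) - 1) * d) ^ n =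
      ∑ j ∈ Finset.range (n + 1),
        genEulerian a d n ((j : ℤ) - 1) * ((i + j - 1).choose n : ℝ) := by
  induction n with
  | zero => intro i hi; simp [genEulerian]
  | succ n ih =>
    intro i hi
    have hstep : ∀ j ∈ Finset.range (n+2),
        genEulerian a d (n+1) ((j:ℤ)-1) * ((i+j-1).choose (n+1) : ℝ)
          = (-a + ((j:ℝ)+1)*d) * genEulerian a d n ((j:ℤ)-1) * ((i+j-1).choose (n+1) : ℝ)
            + (a + ((n:ℝ)+1-(j:ℝ))*d) * genEulerian a d n ((j:ℤ)-2) * ((i+j-1).choose (n+1) : ℝ) := by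
      intro j hj
      simp only [Finset.mem_range] at hj
      have h1 : genEulerian a d (n+1) ((j:ℤ)-1)
          = (-a + (((((j:ℤ)-1) : ℤ) : ℝ) + 2) * d) * genEulerian a d n ((j:ℤ)-1)
            + (a + (((n : ℝ) + 1) - ((((j:ℤ)-1) : ℤ) : ℝ) - 1) * d) * genEulerian a d n ((j:ℤ)-1-1) := by
        simp only [genEulerian]
        rw [if_neg]; omega
      rw [h1]
      have h2 : ((j:ℤ)-1-1) = ((j:ℤ)-2) := by ring
      rw [h2]
      push_cast
      ring
    rw [Finset.sum_congr rfl hstep, Finset.sum_add_distrib]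
    -- first sum: drop last term
    rw [Finset.sum_range_succ (fun j => (-a + ((j:ℝ)+1)*d) * genEulerian a d n ((j:ℤ)-1) * ((i+j-1).choose (n+1) : ℝ))]
    rw [genE_hi a d n (((n+1 : ℕ):ℤ)-1) (by push_cast; omega)]
    -- second sum: drop first term, shift
    rw [Finset.sum_range_succ' (fun j => (a + ((n:ℝ)+1-(j:ℝ))*d) * genEulerian a d n ((j:ℤ)-2) * ((i+j-1).choose (n+1) : ℝ)) (n+1)]
    rw [genE_lo a d n (((0:ℕ):ℤ)-2) (by norm_num)]
    simp only [mul_zero, zero_mul, add_zero]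
    rw [pow_succ, ih i hi, Finset.sum_mul, ← Finset.sum_add_distrib]
    apply Finset.sum_congr rfl
    intro j hj
    have hc1 : (((j+1:ℕ):ℤ)-2) = ((j:ℤ)-1) := by push_cast; ring
    have hc2 : i + (j+1) - 1 = (i+j-1)+1 := by omega
    have hc3 : ((i+j-1 : ℕ) : ℝ) = (i:ℝ) + j - 1 := by
      have h1 : 1 ≤ i + j := by omega
      rw [Nat.cast_sub h1]
      push_cast; ring
    rw [hc1, hc2]
    have hk := keystep a d n (i+j-1) j
    rw [hc3] at hk
    have : ((i:ℝ) + j - 1 - j) = (i:ℝ) - 1 := by ring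
    rw [this] at hk
    push_cast
    linear_combination -genEulerian a d n ((j:ℤ)-1) * hk

/-- General Worpitzky identity: `(a+(i-1)d)^n = ∑_{j=-1}^{n-1} A_{n,j}(a,d) C(i+j, n)`
for `n, i ≥ 1`.  (The summation index `j = -1, 0, …, n-1` is written as `j' - 1` with
`j' = 0, 1, …, n`, so that `C(i+j, n) = C(i+j'-1, n)`.) -/
theorem general_worpitzky (a d : ℝ) (n i : ℕ) (hn : 1 ≤ n) (hi : 1 ≤ i) :
    (a + ((i : ℝ) - 1) * d) ^ n =
      ∑ j ∈ Finset.range (n + 1),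
        genEulerian a d n ((j : ℤ) - 1) * ((i + j - 1).choose n : ℝ) := by
  exact worp a d n i hi
end

section
/- Let a, d be real numbers. For all positive integers m and n, ∑_{i=1}^m (a + (i-1)d)^n = ∑_{j=-1}^{n-1} A_{n,j}(a,d) · C(m+j+1, n+1), where C denotes the binomial coefficient. -/
lemma genEulerian_eq_zero (a d : ℝ) (n : ℕ) (k : ℤ)
    (h : (n : ℤ) ≤ k ∨ k ≤ -2) : genEulerian a d n k = 0 := by
  cases n with
  | zero => rw [genEulerian, if_neg]; omega
  | succ n => rw [genEulerian, if_pos]; push_cast at h ⊢; omega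

lemma choose_id1 (m j n : ℕ) :
    ((n : ℝ) + 1) * ((m + j).choose (n + 1) : ℝ)
      = ((m : ℝ) + j - n) * ((m + j).choose n : ℝ) := by
  by_cases h : n ≤ m + j
  · have := Nat.choose_succ_right_eq (m + j) n
    have hc : (((m + j).choose (n + 1) * (n + 1) : ℕ) : ℝ)
        = (((m + j).choose n * (m + j - n) : ℕ) : ℝ) := by exact_mod_cast this
    push_cast [Nat.cast_sub h] at hc
    push_cast
    linarith [hc]
  · have h1 : (m + j).choose n = 0 := Nat.choose_eq_zero_of_lt (by omega)
    have h2 : (m + j).choose (n + 1) = 0 := Nat.choose_eq_zero_of_lt (by omega)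
    rw [h1, h2]; simp

lemma choose_id2 (m j n : ℕ) :
    ((n : ℝ) + 1) * ((m + j + 1).choose (n + 1) : ℝ)
      = ((m : ℝ) + j + 1) * ((m + j).choose n : ℝ) := by
  have := Nat.add_one_mul_choose_eq (m + j) n
  have hc : (((m + j).succ * (m + j).choose n : ℕ) : ℝ)
      = (((m + j).succ.choose (n + 1) * (n + 1) : ℕ) : ℝ) := by exact_mod_cast this
  push_cast [Nat.succ_eq_add_one] at hc
  push_cast
  linarith [hc]

lemma bracket (a d : ℝ) (m j n : ℕ) :
    (-a + ((j : ℝ) + 1) * d) * ((m + j).choose (n + 1) : ℝ)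
      + (a + ((n : ℝ) - j) * d) * ((m + j + 1).choose (n + 1) : ℝ)
      = (a + (m : ℝ) * d) * ((m + j).choose n : ℝ) := by
  have h1 := choose_id1 m j n
  have h2 := choose_id2 m j n
  have hne : (n : ℝ) + 1 ≠ 0 := by positivity
  apply mul_left_cancel₀ hne
  linear_combination (-a + ((j : ℝ) + 1) * d) * h1 + (a + ((n : ℝ) - j) * d) * h2

lemma worpitzky_s11 (a d : ℝ) (n m : ℕ) :
    (a + (m : ℝ) * d) ^ n =
      ∑ j ∈ Finset.range (n + 1),
        genEulerian a d n ((j : ℤ) - 1) * ((m + j).choose n : ℝ) := by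
  induction n with
  | zero => simp [genEulerian]
  | succ n ih =>
      -- unfold recurrence on the RHS
      have hunf : ∀ j ∈ Finset.range (n + 2),
          genEulerian a d (n + 1) ((j : ℤ) - 1) * ((m + j).choose (n + 1) : ℝ)
          = ((-a + ((j : ℝ) + 1) * d) * genEulerian a d n ((j : ℤ) - 1)
              + (a + ((n : ℝ) + 1 - j) * d) * genEulerian a d n ((j : ℤ) - 2))
              * ((m + j).choose (n + 1) : ℝ) := by
        intro j hj
        simp only [Finset.mem_range] at hj
        rw [genEulerian, if_neg (by omega)]
        push_cast
        ring_nf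
      rw [Finset.sum_congr rfl hunf]
      have hsplit : ∀ j : ℕ,
          ((-a + ((j : ℝ) + 1) * d) * genEulerian a d n ((j : ℤ) - 1)
              + (a + ((n : ℝ) + 1 - j) * d) * genEulerian a d n ((j : ℤ) - 2))
              * ((m + j).choose (n + 1) : ℝ)
          = (-a + ((j : ℝ) + 1) * d) * genEulerian a d n ((j : ℤ) - 1)
              * ((m + j).choose (n + 1) : ℝ)
            + (a + ((n : ℝ) + 1 - j) * d) * genEulerian a d n ((j : ℤ) - 2)
              * ((m + j).choose (n + 1) : ℝ) := by intro j; ring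
      simp only [hsplit]
      rw [Finset.sum_add_distrib]
      -- first sum: drop the top term j = n+1 (A_n(n) = 0)
      have hS1 : ∑ j ∈ Finset.range (n + 2),
          (-a + ((j : ℝ) + 1) * d) * genEulerian a d n ((j : ℤ) - 1)
            * ((m + j).choose (n + 1) : ℝ)
          = ∑ j ∈ Finset.range (n + 1),
          (-a + ((j : ℝ) + 1) * d) * genEulerian a d n ((j : ℤ) - 1)
            * ((m + j).choose (n + 1) : ℝ) := by
        rw [Finset.sum_range_succ, genEulerian_eq_zero a d n _ (by push_cast; omega)]
        ring
      -- second sum: drop j = 0 (A_n(-2) = 0) and shift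
      have hS2 : ∑ j ∈ Finset.range (n + 2),
          (a + ((n : ℝ) + 1 - j) * d) * genEulerian a d n ((j : ℤ) - 2)
            * ((m + j).choose (n + 1) : ℝ)
          = ∑ j ∈ Finset.range (n + 1),
          (a + ((n : ℝ) - j) * d) * genEulerian a d n ((j : ℤ) - 1)
            * ((m + j + 1).choose (n + 1) : ℝ) := by
        rw [Finset.sum_range_succ']
        rw [genEulerian_eq_zero a d n _ (by norm_num)]
        simp only [Nat.cast_add, Nat.cast_one]
        have : ∀ j : ℕ,
            (a + ((n : ℝ) + 1 - ((j : ℝ) + 1)) * d) * genEulerian a d n (((j : ℤ) + 1) - 2)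
              * ((m + (j + 1)).choose (n + 1) : ℝ)
            = (a + ((n : ℝ) - j) * d) * genEulerian a d n ((j : ℤ) - 1)
              * ((m + j + 1).choose (n + 1) : ℝ) := by
          intro j
          have e1 : ((j : ℤ) + 1) - 2 = (j : ℤ) - 1 := by ring
          have e2 : m + (j + 1) = m + j + 1 := by omega
          rw [e1, e2]
          ring_nf
        simp only [this]
        ring
      rw [hS1, hS2, ← Finset.sum_add_distrib]
      have hcomb : ∀ j ∈ Finset.range (n + 1),
          (-a + ((j : ℝ) + 1) * d) * genEulerian a d n ((j : ℤ) - 1)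
            * ((m + j).choose (n + 1) : ℝ)
          + (a + ((n : ℝ) - j) * d) * genEulerian a d n ((j : ℤ) - 1)
            * ((m + j + 1).choose (n + 1) : ℝ)
          = genEulerian a d n ((j : ℤ) - 1)
            * ((a + (m : ℝ) * d) * ((m + j).choose n : ℝ)) := by
        intro j _
        have := bracket a d m j n
        linear_combination genEulerian a d n ((j : ℤ) - 1) * this
      rw [Finset.sum_congr rfl hcomb]
      have : ∑ j ∈ Finset.range (n + 1), genEulerian a d n ((j : ℤ) - 1)
            * ((a + (m : ℝ) * d) * ((m + j).choose n : ℝ))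
          = (a + (m : ℝ) * d) * ∑ j ∈ Finset.range (n + 1),
            genEulerian a d n ((j : ℤ) - 1) * ((m + j).choose n : ℝ) := by
        rw [Finset.mul_sum]; apply Finset.sum_congr rfl; intro j _; ring
      rw [this, ← ih]
      ring

theorem sum_arith_pow_eq' (a d : ℝ) (n : ℕ) (m : ℕ) :
    ∑ i ∈ Finset.Icc 1 m, (a + ((i : ℝ) - 1) * d) ^ n =
      ∑ j ∈ Finset.range (n + 1),
        genEulerian a d n ((j : ℤ) - 1) * ((m + j).choose (n + 1) : ℝ) := by
  induction m with
  | zero =>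
      rw [show Finset.Icc 1 0 = (∅ : Finset ℕ) by rfl]
      rw [Finset.sum_empty]
      symm
      apply Finset.sum_eq_zero
      intro j hj
      simp only [Finset.mem_range] at hj
      rw [Nat.choose_eq_zero_of_lt (by omega)]
      simp
  | succ m ih =>
      rw [Finset.sum_Icc_succ_top (by omega : 1 ≤ m + 1), ih]
      have hpascal : ∀ j ∈ Finset.range (n + 1),
          genEulerian a d n ((j : ℤ) - 1) * (((m + 1 + j).choose (n + 1) : ℕ) : ℝ)
          = genEulerian a d n ((j : ℤ) - 1) * ((m + j).choose (n + 1) : ℝ)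
            + genEulerian a d n ((j : ℤ) - 1) * ((m + j).choose n : ℝ) := by
        intro j _
        have : m + 1 + j = (m + j) + 1 := by omega
        rw [this, Nat.choose_succ_succ]
        push_cast
        ring
      rw [Finset.sum_congr rfl hpascal, Finset.sum_add_distrib, ← worpitzky_s11 a d n m]
      push_cast
      ring

/-- `∑_{i=1}^m (a+(i-1)d)^n = ∑_{j=-1}^{n-1} A_{n,j}(a,d) C(m+j+1, n+1)` for `m, n ≥ 1`.
(The summation index `j = -1, 0, …, n-1` is written as `j' - 1` with `j' = 0, 1, …, n`,
so that `C(m+j+1, n+1) = C(m+j', n+1)`.) -/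
theorem sum_arith_pow_eq (a d : ℝ) (m n : ℕ) (hm : 1 ≤ m) (hn : 1 ≤ n) :
    ∑ i ∈ Finset.Icc 1 m, (a + ((i : ℝ) - 1) * d) ^ n =
      ∑ j ∈ Finset.range (n + 1),
        genEulerian a d n ((j : ℤ) - 1) * ((m + j).choose (n + 1) : ℝ) := by
  exact sum_arith_pow_eq' a d n m
end

section
/- Let a, d be real numbers. For every integer n ≥ 0 and every integer k with -1 ≤ k ≤ n-1, the general Eulerian number is given by the explicit formula A_{n,k}(a,d) = ∑_{i=0}^{k+1} (-1)^i ((k+2-i)d - a)^n C(n+1, i), where C denotes the binomial coefficient. -/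
lemma genEulerian_zero_of_le (a d : ℝ) : ∀ (n : ℕ) (k : ℤ), (n : ℤ) ≤ k → genEulerian a d n k = 0
  | 0, k, h => by
      simp only [genEulerian, ite_eq_right_iff]
      intro hk; omega
  | (n+1), k, h => by
      simp only [genEulerian]
      rw [if_pos (Or.inl (by exact_mod_cast h))]

lemma genEulerian_neg2 (a d : ℝ) (n : ℕ) : genEulerian a d n (-2) = 0 := by
  cases n with
  | zero => simp [genEulerian]
  | succ n => simp only [genEulerian]; rw [if_pos (Or.inr le_rfl)]

lemma genEulerian_rec (a d : ℝ) (n : ℕ) (k : ℤ) (hk : -1 ≤ k) :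
    genEulerian a d (n+1) k = (-a + ((k : ℝ) + 2) * d) * genEulerian a d n k
      + (a + (((n : ℝ) + 1) - (k : ℝ) - 1) * d) * genEulerian a d n (k - 1) := by
  simp only [genEulerian]
  by_cases h : ((n : ℤ) + 1 ≤ k ∨ k ≤ -2)
  · rw [if_pos h]
    have h1 : (n : ℤ) + 1 ≤ k := h.resolve_right (by omega)
    rw [genEulerian_zero_of_le a d n k (by omega), genEulerian_zero_of_le a d n (k-1) (by omega)]
    ring
  · rw [if_neg h]

lemma choose_real_id (n i : ℕ) :
    ((i : ℝ) + 1) * ((n+1).choose (i+1) : ℝ) = ((n : ℝ) + 1 - i) * ((n+1).choose i : ℝ) := by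
  rcases le_or_gt (i+1) (n+1) with h | h
  · have := Nat.choose_succ_right_eq (n+1) i
    have hc : (((n+1).choose (i+1) * (i+1) : ℕ) : ℝ) = (((n+1).choose i * (n+1-i) : ℕ) : ℝ) := by
      exact_mod_cast congrArg Nat.cast this
    push_cast [Nat.cast_sub (by omega : i ≤ n+1)] at hc
    linarith [hc]
  · rcases eq_or_lt_of_le (by omega : n + 1 ≤ i) with h2 | h2
    · rw [Nat.choose_eq_zero_of_lt (by omega)]
      rw [← h2]; push_cast; ring
    · rw [Nat.choose_eq_zero_of_lt (by omega), Nat.choose_eq_zero_of_lt (by omega)]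
      simp

lemma key_sum (a d : ℝ) (n m : ℕ) :
    ∑ i ∈ Finset.range (m+1), (-1:ℝ)^i * (((m:ℝ)+1-i)*d - a)^(n+1) * ((n+2).choose i : ℝ) =
      (-a + ((m:ℝ)+1)*d) *
        ∑ i ∈ Finset.range (m+1), (-1:ℝ)^i * (((m:ℝ)+1-i)*d - a)^n * ((n+1).choose i : ℝ)
      + (a + ((n:ℝ)+1-m)*d) *
        ∑ i ∈ Finset.range m, (-1:ℝ)^i * (((m:ℝ)-i)*d - a)^n * ((n+1).choose i : ℝ) := by
  rw [Finset.mul_sum, Finset.mul_sum, ← sub_eq_iff_eq_add', ← Finset.sum_sub_distrib]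
  rw [Finset.sum_range_succ']
  have h0 : (-1:ℝ)^0 * (((m:ℝ)+1-(0:ℕ))*d - a)^(n+1) * ((n+2).choose 0 : ℝ)
      - (-a + ((m:ℝ)+1)*d) * ((-1:ℝ)^0 * (((m:ℝ)+1-(0:ℕ))*d - a)^n * ((n+1).choose 0 : ℝ)) = 0 := by
    norm_num
    ring
  rw [h0, add_zero]
  apply Finset.sum_congr rfl
  intro i _
  have hb2 : ((n+2).choose (i+1) : ℝ) = ((n+1).choose i : ℝ) + ((n+1).choose (i+1) : ℝ) := by
    exact_mod_cast congrArg Nat.cast (Nat.choose_succ_succ (n+1) i)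
  have hb := choose_real_id n i
  push_cast
  rw [hb2]
  linear_combination ((-1:ℝ)^i * (((m:ℝ)-i)*d - a)^n * d) * hb

lemma genEulerian_main (a d : ℝ) (n : ℕ) : ∀ m : ℕ,
    genEulerian a d n ((m : ℤ) - 1) =
      ∑ i ∈ Finset.range (m+1), (-1:ℝ)^i * (((m:ℝ)+1-i)*d - a)^n * ((n+1).choose i : ℝ) := by
  induction n with
  | zero =>
    intro m
    cases m with
    | zero => simp [genEulerian]
    | succ m' =>
      have hL : genEulerian a d 0 (((m'+1 : ℕ) : ℤ) - 1) = 0 := by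
        simp only [genEulerian]
        rw [if_neg (by push_cast; omega)]
      rw [hL]
      have hsub : Finset.range 2 ⊆ Finset.range (m' + 1 + 1) := by
        apply Finset.range_subset_range.mpr; omega
      rw [← Finset.sum_subset hsub (by
        intro i _ hi
        simp only [Finset.mem_range] at hi
        rw [Nat.choose_eq_zero_of_lt (by omega)]
        simp)]
      simp [Finset.sum_range_succ]
  | succ n ih =>
    intro m
    rw [genEulerian_rec a d n ((m : ℤ) - 1) (by omega)]
    cases m with
    | zero =>
      have h2 : ((0:ℕ) : ℤ) - 1 - 1 = -2 := by norm_num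
      rw [h2, genEulerian_neg2, ih 0]
      push_cast
      simp [Finset.sum_range_succ]
      ring
    | succ m' =>
      have h1 : ((m' + 1 : ℕ) : ℤ) - 1 - 1 = ((m' : ℕ) : ℤ) - 1 := by push_cast; ring
      rw [h1, ih (m'+1), ih m']
      rw [show (n + 1 + 1) = (n + 1) + 1 from rfl]
      rw [key_sum a d n (m'+1)]
      push_cast
      ring

/-- Explicit formula for the general Eulerian numbers:
`A_{n,k}(a,d) = ∑_{i=0}^{k+1} (-1)^i ((k+2-i)d - a)^n C(n+1, i)` for `-1 ≤ k ≤ n-1`. -/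
theorem genEulerian_explicit (a d : ℝ) (n : ℕ) (k : ℤ) (hk : -1 ≤ k) (hk' : k ≤ (n : ℤ) - 1) :
    genEulerian a d n k =
      ∑ i ∈ Finset.range ((k + 2).toNat),
        (-1 : ℝ) ^ i * (((k : ℝ) + 2 - i) * d - a) ^ n * ((n + 1).choose i : ℝ) := by
  obtain ⟨m, hm⟩ : ∃ m : ℕ, k = (m : ℤ) - 1 := ⟨(k + 1).toNat, by omega⟩
  have hkr : (k : ℝ) = (m : ℝ) - 1 := by
    rw [hm]; push_cast; ring
  have ht : (k + 2).toNat = m + 1 := by omega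
  rw [ht, hkr, hm, genEulerian_main a d n m]
  apply Finset.sum_congr rfl
  intro i _
  ring_nf
end

section
/- Let a, d be real numbers. For every integer n ≥ 0 and every real number t with |t| < 1, the series ∑_{j=0}^∞ t^j (a + jd)^n converges and equals -T_n(t, a-d, -d)/(t-1)^{n+1}, where T_n(t, a-d, -d) is the general Eulerian polynomial associated with the arithmetic progression {a-d, a-2d, a-3d, …}. -/
/-!
The proof goes through a Worpitzky identity: by induction on `n`,
`(a + j d)^n = (-1)^n ∑_{k ≤ n} A_{n,k-1}(a-d,-d) C(j+n-k, n)` for every `j : ℕ`.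
Each binomial coefficient has the generating function
`∑_j C(j+n-k, n) t^j = t^k / (1-t)^(n+1)`, and summing these against the Eulerian
numbers gives `(-1)^n T_n(t, a-d, -d) / (1-t)^(n+1)`.
-/

open Finset

section GenEulerian

variable (a d : ℝ) (n : ℕ)

lemma genEulerian_eq_zero_of_le {k : ℤ} (hk : (n : ℤ) ≤ k) : genEulerian a d n k = 0 := by
  cases n with
  | zero => rw [genEulerian, if_neg (by omega)]
  | succ n => rw [genEulerian, if_pos (by push_cast at hk; omega)]

lemma genEulerian_eq_zero_of_le_neg_two {k : ℤ} (hk : k ≤ -2) : genEulerian a d n k = 0 := by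
  cases n with
  | zero => rw [genEulerian, if_neg (by omega)]
  | succ n => rw [genEulerian, if_pos (Or.inr hk)]

lemma genEulerian_succ_natCast_sub_one {k : ℕ} (hk : k ≤ n + 1) :
    genEulerian a d (n + 1) (k - 1)
      = (-a + (k + 1) * d) * genEulerian a d n (k - 1)
        + (a + (n + 1 - k) * d) * genEulerian a d n (k - 2) := by
  rw [genEulerian, if_neg (by omega)]
  push_cast
  ring_nf

/-- The recurrence of the Eulerian numbers, moved by summation by parts onto the test sequence
`g`. -/
lemma sum_genEulerian_succ_mul (g : ℕ → ℝ) :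
    ∑ k ∈ range (n + 2), genEulerian a d (n + 1) (k - 1) * g k
      = ∑ k ∈ range (n + 1), genEulerian a d n (k - 1)
          * ((-a + (k + 1) * d) * g k + (a + (n - k) * d) * g (k + 1)) := by
  have hrec : ∀ k ∈ range (n + 2), genEulerian a d (n + 1) (k - 1) * g k
      = (-a + (k + 1) * d) * genEulerian a d n (k - 1) * g k
        + (a + (n + 1 - k) * d) * genEulerian a d n (k - 2) * g k := fun k hk => by
    rw [genEulerian_succ_natCast_sub_one a d n (by simp at hk; omega)]
    ring
  rw [sum_congr rfl hrec, sum_add_distrib, sum_range_succ, sum_range_succ' _ (n + 1),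
    genEulerian_eq_zero_of_le a d n (k := ((n + 1 : ℕ) : ℤ) - 1) (by push_cast; omega),
    genEulerian_eq_zero_of_le_neg_two a d n (k := ((0 : ℕ) : ℤ) - 2) (by norm_num)]
  simp only [mul_zero, zero_mul, add_zero]
  rw [← sum_add_distrib]
  refine sum_congr rfl fun k _ => ?_
  have hidx : ((k + 1 : ℕ) : ℤ) - 2 = k - 1 := by push_cast; ring
  rw [hidx]
  push_cast
  ring

end GenEulerian

lemma affine_mul_choose_step (a d : ℝ) {n k : ℕ} (j : ℕ) (hk : k ≤ n) :
    (-a - k * d) * ((j + n + 1 - k).choose (n + 1) : ℝ)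
      + (a - (n + 1 - k) * d) * ((j + n - k).choose (n + 1) : ℝ)
      = -(a + j * d) * ((j + n - k).choose n : ℝ) := by
  rcases lt_or_ge j k with hj | hj
  · rw [Nat.choose_eq_zero_of_lt (by omega : j + n - k < n),
      Nat.choose_eq_zero_of_lt (by omega : j + n - k < n + 1),
      Nat.choose_eq_zero_of_lt (by omega : j + n + 1 - k < n + 1)]
    ring
  · set m := j + n - k
    have hm : j + n + 1 - k = m + 1 := by omega
    have pascal : ((m + 1).choose (n + 1) : ℝ) = m.choose n + m.choose (n + 1) := by
      exact_mod_cast Nat.choose_succ_succ m n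
    have absorb : (m.choose (n + 1) : ℝ) * (n + 1) = m.choose n * (j - k) := by
      have h := Nat.choose_succ_right_eq m n
      rw [show m - n = j - k by omega] at h
      rw [← Nat.cast_sub hj]
      exact_mod_cast h
    rw [hm]
    linear_combination (-a - k * d) * pascal - d * absorb

theorem add_mul_pow_eq_sum_genEulerian_mul_choose (a d : ℝ) (n j : ℕ) :
    (a + j * d) ^ n = (-1) ^ n * ∑ k ∈ range (n + 1),
      genEulerian (a - d) (-d) n (k - 1) * ((j + n - k).choose n : ℝ) := by
  induction n with
  | zero => simp [genEulerian]
  | succ n ih =>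
    have hstep : ∑ k ∈ range (n + 2),
        genEulerian (a - d) (-d) (n + 1) (k - 1) * ((j + (n + 1) - k).choose (n + 1) : ℝ)
        = -(a + j * d) * ∑ k ∈ range (n + 1),
          genEulerian (a - d) (-d) n (k - 1) * ((j + n - k).choose n : ℝ) := by
      rw [sum_genEulerian_succ_mul, mul_sum]
      refine sum_congr rfl fun k hk => ?_
      have hk : k ≤ n := by simp at hk; omega
      rw [show j + (n + 1) - (k + 1) = j + n - k by omega, ← add_assoc]
      linear_combination genEulerian (a - d) (-d) n (k - 1) * affine_mul_choose_step a d j hk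
    rw [pow_succ, ih, hstep]
    ring

lemma hasSum_pow_mul_choose_add_sub {𝕜 : Type*} [NormedField 𝕜] [CompleteSpace 𝕜] {t : 𝕜}
    (ht : ‖t‖ < 1) {n k : ℕ} (hk : k ≤ n) :
    HasSum (fun j : ℕ => t ^ j * ((j + n - k).choose n : 𝕜)) (t ^ k / (1 - t) ^ (n + 1)) := by
  have hshift : HasSum (fun m : ℕ => t ^ (m + k) * ((m + k + n - k).choose n : 𝕜))
      (t ^ k / (1 - t) ^ (n + 1)) := by
    have h := (hasSum_choose_mul_geometric_of_norm_lt_one n ht).mul_left (t ^ k)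
    rw [mul_one_div] at h
    refine h.congr_fun fun m => ?_
    rw [show m + k + n - k = m + n by omega, pow_add]
    ring
  have hzero : ∑ i ∈ range k, t ^ i * ((i + n - k).choose n : 𝕜) = 0 :=
    sum_eq_zero fun i hi => by
      rw [Nat.choose_eq_zero_of_lt (by simp at hi; omega), Nat.cast_zero, mul_zero]
  simpa [hzero] using
    (hasSum_nat_add_iff (f := fun j : ℕ => t ^ j * ((j + n - k).choose n : 𝕜)) k).mp hshift

lemma neg_div_sub_one_pow {K : Type*} [Field K] {t : K} (ht : t ≠ 1) (P : K) (n : ℕ) :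
    -P / (t - 1) ^ (n + 1) = (-1) ^ n * P / (1 - t) ^ (n + 1) := by
  have h1t : 1 - t ≠ 0 := sub_ne_zero.mpr ht.symm
  have hsq : ((-1 : K) ^ n) ^ 2 = 1 := by rw [← pow_mul, pow_mul', neg_one_sq, one_pow]
  rw [show t - 1 = -(1 - t) by ring, neg_pow, pow_succ,
    div_eq_div_iff (by simp [h1t]) (by simp [h1t])]
  linear_combination P * (1 - t) ^ (n + 1) * hsq

/-- For `|t| < 1`, `∑_{j=0}^∞ t^j (a+jd)^n = -T_n(t, a-d, -d)/(t-1)^{n+1}`. -/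
theorem hasSum_genEulerianPoly (a d : ℝ) (n : ℕ) (t : ℝ) (ht : |t| < 1) :
    HasSum (fun j : ℕ => t ^ j * (a + (j : ℝ) * d) ^ n)
      (-(genEulerianPoly n t (a - d) (-d)) / (t - 1) ^ (n + 1)) := by
  have hsum := (hasSum_sum fun k (hk : k ∈ range (n + 1)) =>
    (hasSum_pow_mul_choose_add_sub (by rwa [Real.norm_eq_abs]) (Nat.lt_succ_iff.mp (mem_range.mp hk))
      ).mul_left (genEulerian (a - d) (-d) n (k - 1))).mul_left ((-1 : ℝ) ^ n)
  have hvalue : -(genEulerianPoly n t (a - d) (-d)) / (t - 1) ^ (n + 1) = (-1) ^ n *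
      ∑ k ∈ range (n + 1), genEulerian (a - d) (-d) n (k - 1) * (t ^ k / (1 - t) ^ (n + 1)) := by
    rw [neg_div_sub_one_pow (abs_lt.mp ht).2.ne, genEulerianPoly, mul_div_assoc, sum_div]
    simp_rw [mul_div_assoc]
  rw [hvalue]
  refine hsum.congr_fun fun j => ?_
  rw [add_mul_pow_eq_sum_genEulerian_mul_choose, mul_sum, mul_sum, mul_sum]
  exact sum_congr rfl fun k _ => by ring
end
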